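/- Under the biproduct hypotheses with antipodes, the map S(b⋆h) = Σ (S_H(b₍₋₁₎h))₁ · S_B(b₍₀₎) ⋆ (S_H(b₍₋₁₎h))₂ satisfies the right antipode identity: Σ (b⋆h)₁ S((b⋆h)₂) = ε_B(b)ε_H(h) 1_B⋆1_H in B ⋆ H. -/
import Mathlib


open TensorProduct

noncomputable section

/-- The smash product multiplication on `B ⊗ H`, sending
`(a ⊗ g) ⊗ (b ⊗ h)` to `Σ a (g₁ · b) ⊗ g₂ h`. -/
def smashMul (k : Type*) {H B : Type*} [Field k] [Semiring H] [Bialgebra k H]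
    [Ring B] [Algebra k B] (α : H →ₗ[k] B →ₗ[k] B) :
    ((B ⊗[k] H) ⊗[k] (B ⊗[k] H)) →ₗ[k] B ⊗[k] H :=
  (TensorProduct.map
      ((LinearMap.mul' k B) ∘ₗ (TensorProduct.map LinearMap.id (TensorProduct.lift α))
        ∘ₗ (TensorProduct.assoc k B H B).toLinearMap)
      (LinearMap.mul' k H))
    ∘ₗ (TensorProduct.tensorTensorTensorComm k (B ⊗[k] H) H B H).toLinearMap
    ∘ₗ (TensorProduct.map (TensorProduct.assoc k B H H).symm.toLinearMap LinearMap.id)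
    ∘ₗ (TensorProduct.map (TensorProduct.map LinearMap.id Coalgebra.comul) LinearMap.id)

/-- The smash coproduct comultiplication on `B ⊗ H`, sending
`b ⊗ h` to `Σ b₁ ⊗ (b₂)₍₋₁₎ h₁ ⊗ ((b₂)₍₀₎ ⊗ h₂)`. -/
def smashComul (k : Type*) {H B : Type*} [Field k] [Semiring H] [Bialgebra k H]
    [AddCommGroup B] [Module k B] [Coalgebra k B] (ρ : B →ₗ[k] H ⊗[k] B) :
    (B ⊗[k] H) →ₗ[k] ((B ⊗[k] H) ⊗[k] (B ⊗[k] H)) :=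
  (TensorProduct.map
      ((TensorProduct.map LinearMap.id (LinearMap.mul' k H))
        ∘ₗ (TensorProduct.assoc k B H H).toLinearMap)
      LinearMap.id)
  ∘ₗ (TensorProduct.tensorTensorTensorComm k (B ⊗[k] H) B H H).toLinearMap
  ∘ₗ (TensorProduct.map
        ((TensorProduct.assoc k B H B).symm.toLinearMap
          ∘ₗ (TensorProduct.map LinearMap.id ρ))
        LinearMap.id)
  ∘ₗ (TensorProduct.map Coalgebra.comul Coalgebra.comul)

/-- The counit `ε(b ⊗ h) = ε_B(b) ε_H(h)` of the smash coproduct. -/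
def smashCounit (k : Type*) {H B : Type*} [Field k] [Semiring H] [Bialgebra k H]
    [AddCommGroup B] [Module k B] [Coalgebra k B] :
    (B ⊗[k] H) →ₗ[k] k :=
  (LinearMap.mul' k k) ∘ₗ (TensorProduct.map Coalgebra.counit Coalgebra.counit)

/-- The antipode of the Radford biproduct `B ⋆ H`, sending `b ⊗ h` to
`Σ (S_H(b₍₋₁₎ h))₁ · S_B(b₍₀₎) ⊗ (S_H(b₍₋₁₎ h))₂`. -/
def biproductAntipode (k : Type*) {H B : Type*} [Field k] [Semiring H] [HopfAlgebra k H]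
    [Ring B] [Algebra k B]
    (α : H →ₗ[k] B →ₗ[k] B) (ρ : B →ₗ[k] H ⊗[k] B) (SB : B →ₗ[k] B) :
    (B ⊗[k] H) →ₗ[k] (B ⊗[k] H) :=
  (TensorProduct.map (TensorProduct.lift α) LinearMap.id)
  ∘ₗ (TensorProduct.assoc k H B H).symm.toLinearMap
  ∘ₗ (TensorProduct.map LinearMap.id (TensorProduct.comm k H B).toLinearMap)
  ∘ₗ (TensorProduct.assoc k H H B).toLinearMap
  ∘ₗ (TensorProduct.map Coalgebra.comul LinearMap.id)
  ∘ₗ (TensorProduct.map (HopfAlgebra.antipode (R := k)) SB)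
  ∘ₗ (TensorProduct.map (LinearMap.mul' k H) LinearMap.id)
  ∘ₗ (TensorProduct.assoc k H H B).symm.toLinearMap
  ∘ₗ (TensorProduct.map LinearMap.id (TensorProduct.comm k B H).toLinearMap)
  ∘ₗ (TensorProduct.assoc k H B H).toLinearMap
  ∘ₗ (TensorProduct.map ρ LinearMap.id)


set_option linter.unusedSectionVars false
set_option maxHeartbeats 1000000
set_option synthInstance.maxHeartbeats 400000

section RadfordAux

variable {k H B : Type*} [Field k] [Semiring H] [HopfAlgebra k H]
    [Ring B] [Algebra k B] [Coalgebra k B]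
    (α : H →ₗ[k] B →ₗ[k] B) (ρ : B →ₗ[k] H ⊗[k] B) (SB : B →ₗ[k] B)

local notation "SH" => HopfAlgebra.antipode (R := k) (A := H)
local notation "Δ" => (Coalgebra.comul (R := k))
local notation "ε" => (Coalgebra.counit (R := k))

/-- `W ((u₁ ⊗ u₂) ⊗ e) = α u₁ e ⊗ u₂`. -/
def Wmap : ((H ⊗[k] H) ⊗[k] B) →ₗ[k] (B ⊗[k] H) :=
  (TensorProduct.map (TensorProduct.lift α) LinearMap.id)
  ∘ₗ (TensorProduct.assoc k H B H).symm.toLinearMap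
  ∘ₗ (TensorProduct.map LinearMap.id (TensorProduct.comm k H B).toLinearMap)
  ∘ₗ (TensorProduct.assoc k H H B).toLinearMap

lemma Wmap_apply (w : H ⊗[k] H) (e : B) :
    Wmap α (w ⊗ₜ[k] e) = TensorProduct.map (α.flip e) LinearMap.id w := by
  induction w using TensorProduct.induction_on with
  | zero => simp
  | tmul u1 u2 => simp [Wmap]
  | add x y hx hy => simp only [add_tmul, map_add, hx, hy]

/-- `apAux y (g ⊗ d) = Σ α (S_H(g y))₁ (S_B d) ⊗ (S_H(g y))₂`. -/
def apAux (y : H) : (H ⊗[k] B) →ₗ[k] (B ⊗[k] H) :=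
  Wmap α ∘ₗ TensorProduct.map
    ((Coalgebra.comul (R := k)) ∘ₗ SH ∘ₗ LinearMap.mulRight k y) SB

lemma apAux_tmul (y : H) (g : H) (d : B) :
    apAux α SB y (g ⊗ₜ[k] d)
      = TensorProduct.map (α.flip (SB d)) LinearMap.id (Δ (SH (g * y))) := by
  simp [apAux, Wmap_apply]

lemma biproductAntipode_tmul (c : B) (y : H) :
    biproductAntipode k α ρ SB (c ⊗ₜ[k] y) = apAux α SB y (ρ c) := by
  rw [biproductAntipode]
  simp only [LinearMap.comp_apply, TensorProduct.map_tmul, LinearMap.id_coe, id_eq]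
  induction ρ c using TensorProduct.induction_on with
  | zero => simp only [zero_tmul, map_zero]
  | tmul g d =>
    rw [apAux_tmul]
    exact Wmap_apply α (Δ (SH (g * y))) (SB d)
  | add x y hx hy => simp only [add_tmul, map_add, hx, hy]

lemma smashMul_tmul (a c : B) (x y : H) :
    smashMul k α ((a ⊗ₜ[k] x) ⊗ₜ[k] (c ⊗ₜ[k] y)) =
      TensorProduct.map (LinearMap.mulLeft k a ∘ₗ α.flip c) (LinearMap.mulRight k y)
        (Δ x) := by
  rw [smashMul]
  simp only [LinearMap.comp_apply, TensorProduct.map_tmul, LinearMap.id_coe, id_eq]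
  induction Δ x using TensorProduct.induction_on with
  | zero => simp
  | tmul x1 x2 => simp
  | add u v hu hv => simp only [add_tmul, tmul_add, map_add, hu, hv]

/-- `ccAux a y₁ y₂ (g ⊗ d) = (a ⊗ (g y₁)) ⊗ (d ⊗ y₂)`. -/
def ccAux (a : B) (y1 y2 : H) :
    (H ⊗[k] B) →ₗ[k] ((B ⊗[k] H) ⊗[k] (B ⊗[k] H)) :=
  TensorProduct.map ((TensorProduct.mk k B H a) ∘ₗ LinearMap.mulRight k y1)
    ((TensorProduct.mk k B H).flip y2)

@[simp] lemma ccAux_tmul (a : B) (y1 y2 : H) (g : H) (d : B) :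
    ccAux (k := k) (H := H) (B := B) a y1 y2 (g ⊗ₜ[k] d)
      = (a ⊗ₜ[k] (g * y1)) ⊗ₜ[k] (d ⊗ₜ[k] y2) := by
  simp [ccAux]

lemma smashComul_expand (b : B) (h : H) (sb : Finset (B × B)) (sh : Finset (H × H))
    (hsb : Δ b = ∑ i ∈ sb, i.1 ⊗ₜ[k] i.2) (hsh : Δ h = ∑ j ∈ sh, j.1 ⊗ₜ[k] j.2) :
    smashComul k ρ (b ⊗ₜ[k] h)
      = ∑ i ∈ sb, ∑ j ∈ sh, ccAux (k := k) i.1 j.1 j.2 (ρ i.2) := by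
  rw [smashComul]
  simp only [LinearMap.comp_apply, TensorProduct.map_tmul]
  rw [hsb, hsh]
  simp only [sum_tmul, tmul_sum, map_sum]
  rw [Finset.sum_comm]
  refine Finset.sum_congr rfl fun i _ => Finset.sum_congr rfl fun j _ => ?_
  simp only [TensorProduct.map_tmul, LinearMap.comp_apply, LinearMap.id_coe, id_eq]
  induction ρ i.2 using TensorProduct.induction_on with
  | zero => simp
  | tmul g d => simp
  | add u v hu hv => simp only [tmul_add, map_add, add_tmul, hu, hv]

/-- `Gmap a y₁ y₂ (g ⊗ z) = smashMul ((a ⊗ g y₁) ⊗ apAux y₂ z)`. -/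
def Gmap (a : B) (y1 y2 : H) : (H ⊗[k] (H ⊗[k] B)) →ₗ[k] (B ⊗[k] H) :=
  smashMul k α ∘ₗ TensorProduct.map
    ((TensorProduct.mk k B H a) ∘ₗ LinearMap.mulRight k y1) (apAux α SB y2)

lemma ccAux_antipode_eq_Gmap (a : B) (y1 y2 : H) (z : H ⊗[k] B) :
    smashMul k α ((TensorProduct.map LinearMap.id (biproductAntipode k α ρ SB))
        (ccAux (k := k) a y1 y2 z))
      = Gmap α SB a y1 y2 ((TensorProduct.map LinearMap.id ρ) z) := by
  induction z using TensorProduct.induction_on with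
  | zero => simp
  | tmul g d =>
    simp only [ccAux_tmul, TensorProduct.map_tmul, LinearMap.id_coe, id_eq,
      biproductAntipode_tmul (k := k) α ρ SB, Gmap, LinearMap.comp_apply,
      TensorProduct.mk_apply, LinearMap.mulRight_apply]
  | add u v hu hv => simp only [map_add, hu, hv]

lemma smashMul_combine (hα_mul : ∀ (g h : H) (b : B), α (g * h) b = α g (α h b))
    (a e : B) (t : H) (w : H ⊗[k] H) :
    smashMul k α ((a ⊗ₜ[k] t) ⊗ₜ[k] (TensorProduct.map (α.flip e) LinearMap.id w))
      = TensorProduct.map (LinearMap.mulLeft k a ∘ₗ α.flip e) LinearMap.id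
          ((Δ t) * w) := by
  induction w using TensorProduct.induction_on with
  | zero => simp
  | tmul u1 u2 =>
    rw [TensorProduct.map_tmul, smashMul_tmul]
    simp only [LinearMap.id_coe, id_eq]
    induction Δ t using TensorProduct.induction_on with
    | zero => simp
    | tmul t1 t2 =>
      simp only [TensorProduct.map_tmul, Algebra.TensorProduct.tmul_mul_tmul,
        LinearMap.comp_apply, LinearMap.flip_apply, LinearMap.mulLeft_apply,
        LinearMap.mulRight_apply, LinearMap.id_coe, id_eq, hα_mul]
    | add v1 v2 h1 h2 => simp only [map_add, add_mul, h1, h2]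
  | add w1 w2 h1 h2 => simp only [tmul_add, map_add, mul_add, h1, h2]

def Nmap (a d : B) : (H ⊗[k] H) →ₗ[k] (B ⊗[k] H) :=
  TensorProduct.map (LinearMap.mulLeft k a ∘ₗ α.flip (SB d)) LinearMap.id

def Pmap : ((H ⊗[k] H) ⊗[k] (H ⊗[k] H)) →ₗ[k] (H ⊗[k] H) :=
  (Coalgebra.comul (R := k)) ∘ₗ (LinearMap.mul' k H)
    ∘ₗ (LinearMap.lTensor H SH) ∘ₗ (LinearMap.mul' k (H ⊗[k] H))

lemma Gmap_assoc (hα_mul : ∀ (g h : H) (b : B), α (g * h) b = α g (α h b))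
    (a : B) (y1 y2 : H) (d : B) (w : H ⊗[k] H) :
    Gmap α SB a y1 y2 ((TensorProduct.assoc k H H B) (w ⊗ₜ[k] d))
      = Nmap α SB a d (Pmap (k := k) (H := H) (w ⊗ₜ[k] (y1 ⊗ₜ[k] y2))) := by
  induction w using TensorProduct.induction_on with
  | zero => simp
  | tmul g1 g2 =>
    rw [TensorProduct.assoc_tmul]
    simp only [Gmap, LinearMap.comp_apply, TensorProduct.map_tmul,
      TensorProduct.mk_apply, LinearMap.mulRight_apply, apAux_tmul]
    rw [smashMul_combine α hα_mul]
    simp only [Pmap, Nmap, LinearMap.comp_apply, LinearMap.mul'_apply,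
      Algebra.TensorProduct.tmul_mul_tmul, LinearMap.lTensor_tmul,
      Bialgebra.comul_mul]
  | add w1 w2 h1 h2 => simp only [add_tmul, map_add, h1, h2]

lemma Pmap_comul_comul (g g' : H) :
    Pmap (k := k) (H := H) ((Δ g) ⊗ₜ[k] (Δ g'))
      = (ε g * ε g') • ((1 : H) ⊗ₜ[k] (1 : H)) := by
  simp only [Pmap, LinearMap.comp_apply, LinearMap.mul'_apply]
  rw [← Bialgebra.comul_mul, HopfAlgebra.mul_antipode_lTensor_comul_apply,
    Algebra.algebraMap_eq_smul_one, map_smul, Bialgebra.comul_one,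
    Bialgebra.counit_mul, Algebra.TensorProduct.one_def]

end RadfordAux
/-- `S` satisfies the right antipode identity
`Σ (b⋆h)₁ S((b⋆h)₂) = ε_B(b)ε_H(h) 1_B ⋆ 1_H`. -/
theorem biproduct_antipode_right
    (k H B : Type*) [Field k] [Semiring H] [HopfAlgebra k H]
    [Ring B] [Algebra k B] [Coalgebra k B]
    (α : H →ₗ[k] B →ₗ[k] B) (ρ : B →ₗ[k] H ⊗[k] B)
    -- `B` is a left `H`-module
    (hα_one : ∀ b : B, α 1 b = b)
    (hα_mul : ∀ (g h : H) (b : B), α (g * h) b = α g (α h b))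
    -- `B` is a left `H`-module algebra
    (hma : ∀ (h : H) (a b : B),
      α h (a * b) =
        LinearMap.mul' k B (TensorProduct.map (α.flip a) (α.flip b) (Coalgebra.comul h)))
    (hma1 : ∀ h : H, α h (1 : B) = Coalgebra.counit (R := k) h • (1 : B))
    -- `B` is a left `H`-module coalgebra
    (hmc : ∀ (h : H) (b : B),
      Coalgebra.comul (R := k) (α h b) =
        (TensorProduct.map (TensorProduct.lift α) (TensorProduct.lift α))
          ((TensorProduct.tensorTensorTensorComm k H H B B)
            (Coalgebra.comul h ⊗ₜ[k] Coalgebra.comul b)))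
    (hmcε : ∀ (h : H) (b : B),
      Coalgebra.counit (R := k) (α h b)
        = Coalgebra.counit (R := k) h * Coalgebra.counit (R := k) b)
    -- `B` is a left `H`-comodule
    (hρ_coassoc : (TensorProduct.assoc k H H B).toLinearMap
        ∘ₗ (TensorProduct.map Coalgebra.comul LinearMap.id) ∘ₗ ρ
      = (TensorProduct.map LinearMap.id ρ) ∘ₗ ρ)
    (hρ_counit : (TensorProduct.lid k B).toLinearMap
        ∘ₗ (TensorProduct.map Coalgebra.counit LinearMap.id) ∘ₗ ρ = LinearMap.id)
    -- `B` is a left `H`-comodule algebra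
    (hca : ∀ a b : B,
      ρ (a * b) = (TensorProduct.map (LinearMap.mul' k H) (LinearMap.mul' k B))
        ((TensorProduct.tensorTensorTensorComm k H B H B) (ρ a ⊗ₜ[k] ρ b)))
    (hca1 : ρ (1 : B) = (1 : H) ⊗ₜ[k] (1 : B))
    -- `B` is a left `H`-comodule coalgebra
    (hcc : ∀ b : B,
      (TensorProduct.map LinearMap.id Coalgebra.comul) (ρ b)
        = (TensorProduct.map (LinearMap.mul' k H) LinearMap.id)
            ((TensorProduct.tensorTensorTensorComm k H B H B)
              ((TensorProduct.map ρ ρ) (Coalgebra.comul b))))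
    (hccε : ∀ b : B,
      (TensorProduct.rid k H) ((TensorProduct.map LinearMap.id Coalgebra.counit) (ρ b))
        = Coalgebra.counit (R := k) b • (1 : H))
    -- `ε_B` is an algebra map
    (hεB_mul : ∀ a b : B,
      Coalgebra.counit (R := k) (a * b)
        = Coalgebra.counit (R := k) a * Coalgebra.counit (R := k) b)
    (hεB_one : Coalgebra.counit (R := k) (1 : B) = 1)
    -- `Δ_B 1 = 1 ⊗ 1`
    (hΔ1 : Coalgebra.comul (R := k) (1 : B) = (1 : B) ⊗ₜ[k] (1 : B))
    -- the twisted comultiplication condition (1) of Radford's theorem: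
    -- `Δ_B(ab) = Σ a₁ ((a₂)₍₋₁₎ · b₁) ⊗ (a₂)₍₀₎ b₂`
    (htw : ∀ a b : B,
      Coalgebra.comul (R := k) (a * b) =
        (TensorProduct.map
            ((LinearMap.mul' k B)
              ∘ₗ (TensorProduct.map LinearMap.id (TensorProduct.lift α))
              ∘ₗ (TensorProduct.assoc k B H B).toLinearMap)
            (LinearMap.mul' k B))
          ((TensorProduct.tensorTensorTensorComm k (B ⊗[k] H) B B B)
            ((TensorProduct.map
                ((TensorProduct.assoc k B H B).symm.toLinearMap
                  ∘ₗ (TensorProduct.map LinearMap.id ρ))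
                LinearMap.id)
              (Coalgebra.comul a ⊗ₜ[k] Coalgebra.comul b))))
    -- the Yetter–Drinfeld condition (2) of Radford's theorem:
    -- `Σ h₁ b₍₋₁₎ ⊗ h₂ · b₍₀₎ = Σ (h₁·b)₍₋₁₎ h₂ ⊗ (h₁·b)₍₀₎`
    (hYD : ∀ (h : H) (b : B),
      (TensorProduct.map (LinearMap.mul' k H) (TensorProduct.lift α))
          ((TensorProduct.tensorTensorTensorComm k H H H B)
            (Coalgebra.comul h ⊗ₜ[k] ρ b))
        = ((TensorProduct.map (LinearMap.mul' k H) LinearMap.id)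
            ∘ₗ (TensorProduct.assoc k H H B).symm.toLinearMap
            ∘ₗ (TensorProduct.map LinearMap.id (TensorProduct.comm k B H).toLinearMap)
            ∘ₗ (TensorProduct.assoc k H B H).toLinearMap
            ∘ₗ (TensorProduct.map (ρ ∘ₗ α.flip b) LinearMap.id))
          (Coalgebra.comul h))
    (SB : B →ₗ[k] B)
    -- `S_B` is an antipode for the braided Hopf algebra `B`:
    -- `Σ S_B(b₁) b₂ = ε_B(b) 1_B = Σ b₁ S_B(b₂)`
    (hSB_left : ∀ b : B,
      LinearMap.mul' k B ((TensorProduct.map SB LinearMap.id) (Coalgebra.comul b))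
        = Coalgebra.counit (R := k) b • (1 : B))
    (hSB_right : ∀ b : B,
      LinearMap.mul' k B ((TensorProduct.map LinearMap.id SB) (Coalgebra.comul b))
        = Coalgebra.counit (R := k) b • (1 : B))
    :
    ∀ (b : B) (h : H),
      smashMul k α
        ((TensorProduct.map LinearMap.id (biproductAntipode k α ρ SB))
          (smashComul k ρ (b ⊗ₜ[k] h)))
      = (Coalgebra.counit (R := k) b * Coalgebra.counit (R := k) h)
          • ((1 : B) ⊗ₜ[k] (1 : H)) := by

  classical
  intro b h
  obtain ⟨sb, hsb⟩ := TensorProduct.exists_finset (R := k) (Coalgebra.comul (R := k) b)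
  obtain ⟨sh, hsh⟩ := TensorProduct.exists_finset (R := k) (Coalgebra.comul (R := k) h)
  rw [smashComul_expand ρ b h sb sh hsb hsh]
  simp only [map_sum]
  have step1 : ∀ i : B × B,
      ∑ j ∈ sh, smashMul k α
          ((TensorProduct.map LinearMap.id (biproductAntipode k α ρ SB))
            (ccAux (k := k) i.1 j.1 j.2 (ρ i.2)))
        = Coalgebra.counit (R := k) h • ((i.1 * SB i.2) ⊗ₜ[k] (1 : H)) := by
    intro i
    obtain ⟨sp, hsp⟩ := TensorProduct.exists_finset (R := k) (ρ i.2)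
    have hco : (TensorProduct.map LinearMap.id ρ) (ρ i.2)
        = (TensorProduct.assoc k H H B)
            ((TensorProduct.map (Coalgebra.comul (R := k)) LinearMap.id) (ρ i.2)) := by
      have := LinearMap.congr_fun hρ_coassoc i.2
      simp only [LinearMap.comp_apply] at this
      exact this.symm
    have hc : ∑ p ∈ sp, (Coalgebra.counit (R := k) p.1 : k) • p.2 = i.2 := by
      have h2 := LinearMap.congr_fun hρ_counit i.2
      simp only [LinearMap.comp_apply, LinearMap.id_coe, id_eq] at h2
      rw [hsp] at h2
      simpa [map_sum] using h2
    calc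
      ∑ j ∈ sh, smashMul k α
          ((TensorProduct.map LinearMap.id (biproductAntipode k α ρ SB))
            (ccAux (k := k) i.1 j.1 j.2 (ρ i.2)))
          = ∑ j ∈ sh, Gmap α SB i.1 j.1 j.2
              ((TensorProduct.map LinearMap.id ρ) (ρ i.2)) :=
        Finset.sum_congr rfl fun j _ => ccAux_antipode_eq_Gmap α ρ SB i.1 j.1 j.2 (ρ i.2)
      _ = ∑ j ∈ sh, ∑ p ∈ sp, Gmap α SB i.1 j.1 j.2
              ((TensorProduct.assoc k H H B)
                ((Coalgebra.comul (R := k) p.1) ⊗ₜ[k] p.2)) := by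
        refine Finset.sum_congr rfl fun j _ => ?_
        rw [hco, hsp]
        simp only [map_sum, TensorProduct.map_tmul, LinearMap.id_coe, id_eq]
      _ = ∑ p ∈ sp, ∑ j ∈ sh, Nmap α SB i.1 p.2
              (Pmap (k := k) (H := H)
                ((Coalgebra.comul (R := k) p.1) ⊗ₜ[k] (j.1 ⊗ₜ[k] j.2))) := by
        rw [Finset.sum_comm]
        exact Finset.sum_congr rfl fun p _ => Finset.sum_congr rfl fun j _ =>
          Gmap_assoc α SB hα_mul i.1 j.1 j.2 p.2 (Coalgebra.comul (R := k) p.1)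
      _ = ∑ p ∈ sp, Nmap α SB i.1 p.2
              (Pmap (k := k) (H := H)
                ((Coalgebra.comul (R := k) p.1) ⊗ₜ[k] (Coalgebra.comul (R := k) h))) := by
        refine Finset.sum_congr rfl fun p _ => ?_
        rw [← map_sum, ← map_sum, ← tmul_sum, ← hsh]
      _ = ∑ p ∈ sp, (Coalgebra.counit (R := k) p.1 * Coalgebra.counit (R := k) h)
              • ((i.1 * SB p.2) ⊗ₜ[k] (1 : H)) := by
        refine Finset.sum_congr rfl fun p _ => ?_
        rw [Pmap_comul_comul, map_smul]
        simp [Nmap, hα_one]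
      _ = Coalgebra.counit (R := k) h • ((i.1 * SB i.2) ⊗ₜ[k] (1 : H)) := by
        rw [← hc]
        simp only [map_sum, map_smul, Finset.mul_sum, sum_tmul, Finset.smul_sum]
        refine Finset.sum_congr rfl fun p _ => ?_
        rw [mul_smul_comm]
        simp only [smul_tmul', smul_smul]
        rw [mul_comm]
  rw [Finset.sum_congr rfl fun i _ => step1 i]
  have hb : ∑ i ∈ sb, i.1 * SB i.2 = Coalgebra.counit (R := k) b • (1 : B) := by
    have h3 := hSB_right b
    rw [hsb] at h3
    simpa [map_sum] using h3
  rw [← Finset.smul_sum, ← sum_tmul, hb]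
  simp only [smul_tmul', smul_smul]
  rw [mul_comm]
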